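/- Let u, v : ℝ⁴ → ℝ be smooth functions satisfying, at every point of ℝ⁴, the equations u₂ − v₁ = 0 and u₁ + v₂ + u₃v₄ − u₄v₃ = 0, where subscripts denote partial derivatives with respect to the corresponding coordinate. For λ ∈ ℝ define vector fields X, Y : ℝ⁴ → ℝ⁴ by X(x) = e₂ + u₃(x)·e₄ − u₄(x)·e₃ + λ·e₁ and Y(x) = e₁ − v₃(x)·e₄ + v₄(x)·e₃ − λ·e₂. Then for every λ ∈ ℝ the Lie bracket [X, Y] vanishes identically on ℝ⁴. -/

import Mathlib

/-- The `i`-th standard basis vector of `ℝ^d` (0-based index). -/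
def stdV (d i : ℕ) : Fin d → ℝ := fun j => if (j : ℕ) = i then 1 else 0

/-- Partial derivative of `f : ℝ^d → ℝ` in the `i`-th coordinate direction (0-based index). -/
noncomputable def pd (d : ℕ) (f : (Fin d → ℝ) → ℝ) (i : ℕ) (x : Fin d → ℝ) : ℝ :=
  fderiv ℝ f x (stdV d i)

/-- Lie bracket of vector fields: `[X,Y](x) = DY(x)(X(x)) - DX(x)(Y(x))`. -/
noncomputable def lieB (d : ℕ) (X Y : (Fin d → ℝ) → (Fin d → ℝ)) (x : Fin d → ℝ) :
    Fin d → ℝ :=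
  fderiv ℝ Y x (X x) - fderiv ℝ X x (Y x)

private lemma pd_contDiff {f : (Fin 4 → ℝ) → ℝ} (hf : ContDiff ℝ (⊤ : ℕ∞) f) (i : ℕ) :
    ContDiff ℝ (⊤ : ℕ∞) (pd 4 f i) := by
  have h : pd 4 f i = fun x => (ContinuousLinearMap.apply ℝ ℝ (stdV 4 i)) (fderiv ℝ f x) := rfl
  rw [h]
  exact (ContinuousLinearMap.apply ℝ ℝ (stdV 4 i)).contDiff.comp (hf.fderiv_right (by simp))

private lemma fderiv_pd {f : (Fin 4 → ℝ) → ℝ} (hf : ContDiff ℝ (⊤ : ℕ∞) f) (i : ℕ)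
    (x h : Fin 4 → ℝ) :
    fderiv ℝ (pd 4 f i) x h = fderiv ℝ (fderiv ℝ f) x h (stdV 4 i) := by
  have hd : DifferentiableAt ℝ (fderiv ℝ f) x :=
    ((hf.fderiv_right (m := ((⊤ : ℕ∞) : WithTop ℕ∞)) (by simp)).differentiable
      (by simp)) x
  have h2 : fderiv ℝ (pd 4 f i) x
      = (ContinuousLinearMap.apply ℝ ℝ (stdV 4 i)).comp (fderiv ℝ (fderiv ℝ f) x) :=
    ((ContinuousLinearMap.apply ℝ ℝ (stdV 4 i)).hasFDerivAt.comp x hd.hasFDerivAt).fderiv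
  rw [h2]; rfl

private lemma pd_symm {f : (Fin 4 → ℝ) → ℝ} (hf : ContDiff ℝ (⊤ : ℕ∞) f) (i j : ℕ)
    (x : Fin 4 → ℝ) :
    pd 4 (pd 4 f i) j x = pd 4 (pd 4 f j) i x := by
  have hs : IsSymmSndFDerivAt ℝ f x := hf.contDiffAt.isSymmSndFDerivAt (by
    rw [minSmoothness_of_isRCLikeNormedField]
    rw [show ((2:WithTop ℕ∞)) = ((2:ℕ∞):WithTop ℕ∞) from rfl]
    exact WithTop.coe_le_coe.mpr le_top)
  show fderiv ℝ (pd 4 f i) x (stdV 4 j) = fderiv ℝ (pd 4 f j) x (stdV 4 i)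
  rw [fderiv_pd hf i x, fderiv_pd hf j x]
  exact hs _ _

private lemma one_le_coe_top : (1 : WithTop ℕ∞) ≤ ((⊤ : ℕ∞) : WithTop ℕ∞) := by
  rw [show ((1 : WithTop ℕ∞)) = ((1 : ℕ∞) : WithTop ℕ∞) from rfl]
  exact WithTop.coe_le_coe.mpr le_top

theorem stmt8 (u v : (Fin 4 → ℝ) → ℝ)
    (hu : ContDiff ℝ (⊤ : ℕ∞) u) (hv : ContDiff ℝ (⊤ : ℕ∞) v)
    (h1 : ∀ x, pd 4 u 1 x - pd 4 v 0 x = 0)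
    (h2 : ∀ x, pd 4 u 0 x + pd 4 v 1 x
        + pd 4 u 2 x * pd 4 v 3 x - pd 4 u 3 x * pd 4 v 2 x = 0) :
    ∀ lam : ℝ, ∀ x : Fin 4 → ℝ,
      lieB 4
        (fun y => stdV 4 1 + pd 4 u 2 y • stdV 4 3 - pd 4 u 3 y • stdV 4 2 + lam • stdV 4 0)
        (fun y => stdV 4 0 - pd 4 v 2 y • stdV 4 3 + pd 4 v 3 y • stdV 4 2 - lam • stdV 4 1)
        x = 0 := by
  intro lam x
  have du0 := (pd_contDiff hu 0).differentiable (by simp)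
  have du1 := (pd_contDiff hu 1).differentiable (by simp)
  have du2 := (pd_contDiff hu 2).differentiable (by simp)
  have du3 := (pd_contDiff hu 3).differentiable (by simp)
  have dv0 := (pd_contDiff hv 0).differentiable (by simp)
  have dv1 := (pd_contDiff hv 1).differentiable (by simp)
  have dv2 := (pd_contDiff hv 2).differentiable (by simp)
  have dv3 := (pd_contDiff hv 3).differentiable (by simp)
  -- differentiated first equation
  have H1 : ∀ j : ℕ, pd 4 (pd 4 u 1) j x = pd 4 (pd 4 v 0) j x := by
    intro j
    have hz : (fun y => pd 4 u 1 y - pd 4 v 0 y) = fun _ => (0 : ℝ) := funext h1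
    have e : fderiv ℝ (fun y => pd 4 u 1 y - pd 4 v 0 y) x (stdV 4 j) = 0 := by
      rw [hz]; simp
    rw [fderiv_fun_sub (du1 x) (dv0 x)] at e
    have e' : pd 4 (pd 4 u 1) j x - pd 4 (pd 4 v 0) j x = 0 := by
      simpa [pd, ContinuousLinearMap.sub_apply] using e
    linarith
  -- differentiated second equation
  have H2 : ∀ j : ℕ, pd 4 (pd 4 u 0) j x + pd 4 (pd 4 v 1) j x
      + (pd 4 u 2 x * pd 4 (pd 4 v 3) j x + pd 4 v 3 x * pd 4 (pd 4 u 2) j x)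
      - (pd 4 u 3 x * pd 4 (pd 4 v 2) j x + pd 4 v 2 x * pd 4 (pd 4 u 3) j x) = 0 := by
    intro j
    have hg : HasFDerivAt
        (fun y => pd 4 u 0 y + pd 4 v 1 y + pd 4 u 2 y * pd 4 v 3 y - pd 4 u 3 y * pd 4 v 2 y)
        ((((fderiv ℝ (pd 4 u 0) x) + (fderiv ℝ (pd 4 v 1) x))
          + (pd 4 u 2 x • fderiv ℝ (pd 4 v 3) x + pd 4 v 3 x • fderiv ℝ (pd 4 u 2) x))
          - (pd 4 u 3 x • fderiv ℝ (pd 4 v 2) x + pd 4 v 2 x • fderiv ℝ (pd 4 u 3) x)) x := by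
      exact (((du0 x).hasFDerivAt.add (dv1 x).hasFDerivAt).add
        ((du2 x).hasFDerivAt.mul (dv3 x).hasFDerivAt)).sub
        ((du3 x).hasFDerivAt.mul (dv2 x).hasFDerivAt)
    have hz : (fun y => pd 4 u 0 y + pd 4 v 1 y + pd 4 u 2 y * pd 4 v 3 y
        - pd 4 u 3 y * pd 4 v 2 y) = fun _ => (0 : ℝ) := funext h2
    have e := hg.fderiv
    rw [hz, fderiv_fun_const] at e
    have e2 := congrFun (congrArg (fun (L : (Fin 4 → ℝ) →L[ℝ] ℝ) => (L : (Fin 4 → ℝ) → ℝ))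
      e) (stdV 4 j)
    simpa [pd, ContinuousLinearMap.sub_apply, ContinuousLinearMap.add_apply,
      ContinuousLinearMap.smul_apply, smul_eq_mul] using e2.symm
  -- symmetry of second derivatives
  have Su : ∀ i j : ℕ, pd 4 (pd 4 u i) j x = pd 4 (pd 4 u j) i x := fun i j => pd_symm hu i j x
  have Sv : ∀ i j : ℕ, pd 4 (pd 4 v i) j x = pd 4 (pd 4 v j) i x := fun i j => pd_symm hv i j x
  -- derivatives of the vector fields
  have hX : HasFDerivAt
      (fun y => stdV 4 1 + pd 4 u 2 y • stdV 4 3 - pd 4 u 3 y • stdV 4 2 + lam • stdV 4 0)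
      ((((0 : (Fin 4 → ℝ) →L[ℝ] (Fin 4 → ℝ)) + (fderiv ℝ (pd 4 u 2) x).smulRight (stdV 4 3))
        - (fderiv ℝ (pd 4 u 3) x).smulRight (stdV 4 2)) + 0) x :=
    (((hasFDerivAt_const _ _).add ((du2 x).hasFDerivAt.smul_const _)).sub
      ((du3 x).hasFDerivAt.smul_const _)).add (hasFDerivAt_const _ _)
  have hY : HasFDerivAt
      (fun y => stdV 4 0 - pd 4 v 2 y • stdV 4 3 + pd 4 v 3 y • stdV 4 2 - lam • stdV 4 1)
      ((((0 : (Fin 4 → ℝ) →L[ℝ] (Fin 4 → ℝ)) - (fderiv ℝ (pd 4 v 2) x).smulRight (stdV 4 3))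
        + (fderiv ℝ (pd 4 v 3) x).smulRight (stdV 4 2)) - 0) x :=
    (((hasFDerivAt_const _ _).sub ((dv2 x).hasFDerivAt.smul_const _)).add
      ((dv3 x).hasFDerivAt.smul_const _)).sub (hasFDerivAt_const _ _)
  unfold lieB
  rw [hX.fderiv, hY.fderiv]
  funext j
  simp only [ContinuousLinearMap.add_apply, ContinuousLinearMap.sub_apply,
    ContinuousLinearMap.zero_apply, ContinuousLinearMap.smulRight_apply,
    map_add, map_sub, map_smul]
  have key : ∀ (g : (Fin 4 → ℝ) → ℝ) (i jj : ℕ),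
      fderiv ℝ (pd 4 g i) x (stdV 4 jj) = pd 4 (pd 4 g i) jj x := fun _ _ _ => rfl
  simp only [key]
  fin_cases j <;>
    simp only [Pi.add_apply, Pi.sub_apply, Pi.smul_apply, Pi.zero_apply, stdV,
      smul_eq_mul, Fin.isValue] <;> norm_num
  · rw [Sv 3 1, Sv 3 2, Sv 3 0, Su 3 0, Su 3 2, Su 3 1, H1 3]
    linear_combination H2 3
  · rw [Sv 2 1, Sv 2 3, Sv 2 0, Su 2 0, Su 2 3, Su 2 1, H1 2]
    linear_combination -(H2 2)
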